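/- Define signed eigenvalues e(λ) by the Renteln recurrence: e(∅) = 1 and e(λ) = (−1)^h·e(λ − ĥ) + (−1)^{h+λ₁}·h·e(λ − ĉ), where ĥ is the hook of λ (first row and first column, of size h = λ₁ + r − 1 for λ with r parts), λ − ĥ is λ with its hook removed, and λ − ĉ is λ with its first column removed. Then for every partition λ = (λ₁,…,λ_r) of n ≥ 2, the sign of e(λ) equals (−1)^{n − λ₁}, i.e., e(λ) is nonzero and positive iff n − λ₁ is even. -/

import Mathlib

def colErase (l : List ℕ) : List ℕ := (l.map (· - 1)).filter (· ≠ 0)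

def IsPartition (l : List ℕ) : Prop := l.Pairwise (· ≥ ·) ∧ ∀ x ∈ l, 0 < x

/-!
With `g(λ) = (-1)^(n - λ₁) e(λ)` the recurrence becomes `g(λ) = h g(λ - ĉ) ± g(λ - ĥ)`, the sign
being `-` exactly when `λ₁ ≡ λ₂ (mod 2)`, and the claim is `g(λ) ≥ 1` for `n ≥ 2`.
Write `λ_{>j} = (λ_{j+1}, λ_{j+2}, …)`. Since `λ - ĥ = (λ - ĉ)_{>1}` and
`(λ - ĉ)_{>j} = λ_{>j} - ĉ`, expanding `g(λ)` and `g(λ_{>j})` by the recurrence expresses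
everything through suffixes of `λ - ĉ`, and positivity goes through by strong induction on `n`
once it is strengthened by
`g(λ_{>j}) < g(λ)` for `1 ≤ j < r` when `λ₁ ≡ λ₂ (mod 2)`, and
`g(λ_{>j}) + g(λ_{>1}) ≤ g(λ)` for `j ≥ 2` when `λ₁ = λ₂ > λ₃`;
the slack comes from `h(λ_{>j}) ≤ h(λ) - j`.
-/

namespace List

variable {α : Type*}

theorem headD_drop (l : List α) (d : α) (j : ℕ) : (l.drop j).headD d = l.getD j d := by
  rw [headD_eq_head?_getD, head?_drop, getD_eq_getElem?_getD]

theorem getD_drop (l : List α) (d : α) (i j : ℕ) : (l.drop i).getD j d = l.getD (i + j) d := by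
  simp only [getD_eq_getElem?_getD, getElem?_drop]

theorem lt_length_of_getD_ne {l : List α} {d : α} {j : ℕ} (h : l.getD j d ≠ d) :
    j < l.length := by
  by_contra! hj
  exact h (getD_eq_default _ _ hj)

theorem headD_le_sum (l : List ℕ) : l.headD 0 ≤ l.sum := by
  cases l <;> simp

end List

namespace IsPartition

variable {l : List ℕ}

theorem drop (h : IsPartition l) (j : ℕ) : IsPartition (l.drop j) :=
  ⟨h.1.drop, fun x hx => h.2 x (List.mem_of_mem_drop hx)⟩

theorem of_cons {a : ℕ} (h : IsPartition (a :: l)) : IsPartition l :=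
  h.drop 1

theorem getD_pos (h : IsPartition l) {j : ℕ} (hj : j < l.length) : 0 < l.getD j 0 := by
  rw [List.getD_eq_getElem _ _ hj]
  exact h.2 _ (List.getElem_mem hj)

theorem headD_pos (h : IsPartition l) (hne : l ≠ []) : 0 < l.headD 0 :=
  List.headD_drop l 0 0 ▸ h.getD_pos (List.length_pos_iff.mpr hne)

theorem getD_antitone (h : IsPartition l) {i j : ℕ} (hij : i ≤ j) :
    l.getD j 0 ≤ l.getD i 0 := by
  rcases hij.lt_or_eq with hij | rfl
  · by_cases hj : j < l.length
    · rw [List.getD_eq_getElem _ _ hj, List.getD_eq_getElem _ _ (hij.trans hj)]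
      exact List.pairwise_iff_getElem.mp h.1 i j (hij.trans hj) hj hij
    · rw [List.getD_eq_default _ _ (not_lt.mp hj)]
      exact Nat.zero_le _
  · rfl

theorem getD_le_headD (h : IsPartition l) (j : ℕ) : l.getD j 0 ≤ l.headD 0 :=
  List.headD_drop l 0 0 ▸ h.getD_antitone (Nat.zero_le j)

theorem le_headD (h : IsPartition l) {x : ℕ} (hx : x ∈ l) : x ≤ l.headD 0 := by
  cases l with
  | nil => simp at hx
  | cons a t =>
    rcases List.mem_cons.mp hx with rfl | hx
    · rfl
    · exact (List.pairwise_cons.mp h.1).1 x hx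

theorem length_le_sum (h : IsPartition l) : l.length ≤ l.sum :=
  List.length_le_sum_of_one_le l h.2

theorem sum_le_length_mul_headD (h : IsPartition l) : l.sum ≤ l.length * l.headD 0 :=
  (List.sum_le_card_nsmul l _ fun _ hx => h.le_headD hx).trans_eq (smul_eq_mul _ _)

end IsPartition

section ColErase

variable {l : List ℕ}

theorem colErase_eq_nil_iff : colErase l = [] ↔ ∀ x ∈ l, x ≤ 1 := by
  simp only [colErase, List.filter_eq_nil_iff, List.forall_mem_map]
  simp only [ne_eq, decide_not, Bool.not_eq_true', decide_eq_false_iff_not, not_not]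
  exact forall₂_congr fun _ _ => by omega

theorem colErase_cons {a : ℕ} (ha : 2 ≤ a) (t : List ℕ) :
    colErase (a :: t) = (a - 1) :: colErase t := by
  rw [colErase, List.map_cons, List.filter_cons_of_pos (by simp; omega)]
  rfl

theorem sum_colErase (h : ∀ x ∈ l, 0 < x) : (colErase l).sum + l.length = l.sum := by
  induction l with
  | nil => rfl
  | cons a t ih =>
    have ht := ih fun x hx => h x (List.mem_cons_of_mem a hx)
    have ha := h a List.mem_cons_self
    simp only [colErase, List.map_cons, List.filter_cons] at ht ⊢
    split_ifs <;> simp only [List.sum_cons, List.length_cons] <;> grind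

theorem IsPartition.colErase (h : IsPartition l) : IsPartition (colErase l) :=
  ⟨(h.1.map _ fun a b (hab : a ≥ b) => (Nat.sub_le_sub_right hab 1 : a - 1 ≥ b - 1)).filter _,
    fun x hx => by simpa [Nat.pos_iff_ne_zero] using List.of_mem_filter hx⟩

theorem colErase_eq_nil (h : IsPartition l) (h1 : l.headD 0 ≤ 1) : colErase l = [] :=
  colErase_eq_nil_iff.mpr fun _ hx => (h.le_headD hx).trans h1

theorem colErase_tail (h : IsPartition l) : colErase l.tail = (colErase l).tail := by
  cases l with
  | nil => rfl
  | cons a t =>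
    by_cases ha : 2 ≤ a
    · rw [colErase_cons ha, List.tail_cons, List.tail_cons]
    · have h1 : (a :: t).headD 0 ≤ 1 := by simp; omega
      rw [colErase_eq_nil h h1, List.tail_cons, List.tail_nil, colErase_eq_nil_iff]
      exact fun x hx => (h.le_headD (List.mem_cons_of_mem a hx)).trans h1

theorem colErase_drop (h : IsPartition l) (j : ℕ) :
    colErase (l.drop j) = (colErase l).drop j := by
  induction j with
  | zero => rfl
  | succ j ih => rw [← List.tail_drop, colErase_tail (h.drop j), ih, List.tail_drop]

theorem headD_colErase (h : IsPartition l) : (colErase l).headD 0 = l.headD 0 - 1 := by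
  cases l with
  | nil => rfl
  | cons a t =>
    by_cases ha : 2 ≤ a
    · rw [colErase_cons ha]
      rfl
    · rw [colErase_eq_nil h (by simp; omega)]
      simp only [List.headD_nil, List.headD_cons]
      omega

theorem getD_colErase (h : IsPartition l) (j : ℕ) : (colErase l).getD j 0 = l.getD j 0 - 1 := by
  rw [← List.headD_drop, ← colErase_drop h, headD_colErase (h.drop j), List.headD_drop]

theorem sum_colErase_lt (h : IsPartition l) (hne : l ≠ []) : (colErase l).sum < l.sum := by
  have := sum_colErase h.2
  have := List.length_pos_iff.mpr hne
  omega

theorem colErase_tail_eq_nil (h : IsPartition l) (h1 : l.getD 1 0 ≤ 1) :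
    (colErase l).tail = [] := by
  rw [← colErase_tail h, ← List.drop_one]
  exact colErase_eq_nil (h.drop 1) (by rwa [List.headD_drop])

theorem one_lt_length_colErase (h : IsPartition l) (h2 : 2 ≤ l.getD 1 0) :
    1 < (colErase l).length :=
  List.lt_length_of_getD_ne (by rw [getD_colErase h]; omega)

theorem two_le_sum_colErase (h : IsPartition l) (h2 : 2 ≤ l.getD 1 0) :
    2 ≤ (colErase l).sum :=
  (one_lt_length_colErase h h2).trans_le h.colErase.length_le_sum

end ColErase

def hookLength (l : List ℕ) : ℕ := l.headD 0 + l.length - 1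

theorem hookLength_drop (l : List ℕ) (j : ℕ) :
    hookLength (l.drop j) = l.getD j 0 + (l.length - j) - 1 := by
  rw [hookLength, List.headD_drop, List.length_drop]

theorem neg_one_pow_mul_le (k : ℕ) {x : ℤ} (hx : 0 ≤ x) : (-1) ^ k * x ≤ x := by
  rcases neg_one_pow_eq_or ℤ k with h | h <;> rw [h] <;> linarith

/-- `colErase l` is `λ - ĉ` and `(colErase l).tail` is `λ - ĥ`. -/
structure HookRecurrence (g : List ℕ → ℤ) : Prop where
  nil : g [] = 1
  eq : ∀ l, IsPartition l → l ≠ [] → g l = hookLength l * g (colErase l)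
    + (-1) ^ (l.headD 0 + (colErase l).getD 1 0) * g (colErase l).tail

structure EigenBounds (g : List ℕ → ℤ) (l : List ℕ) : Prop where
  one_le : 2 ≤ l.sum → 1 ≤ g l
  drop_lt : l.headD 0 % 2 = l.getD 1 0 % 2 → ∀ j, 1 ≤ j → j < l.length → g (l.drop j) < g l
  drop_add_le : l.getD 1 0 = l.headD 0 → l.getD 2 0 < l.headD 0 →
    ∀ j, 2 ≤ j → g (l.drop j) + g (l.drop 1) ≤ g l

theorem neg_one_pow_headD_add_getD_colErase {l : List ℕ} (hl : IsPartition l)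
    (h2 : 0 < l.getD 1 0) (hpar : l.headD 0 % 2 = l.getD 1 0 % 2) :
    (-1 : ℤ) ^ (l.headD 0 + (colErase l).getD 1 0) = -1 := by
  rw [getD_colErase hl]
  exact Odd.neg_one_pow (Nat.odd_iff.mpr (by omega))

theorem headD_colErase_mod_two {l : List ℕ} (hl : IsPartition l) (h2 : 2 ≤ l.getD 1 0)
    (hpar : l.headD 0 % 2 = l.getD 1 0 % 2) :
    (colErase l).headD 0 % 2 = (colErase l).getD 1 0 % 2 := by
  have := hl.getD_le_headD 1
  rw [headD_colErase hl, getD_colErase hl]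
  omega

namespace HookRecurrence

variable {g : List ℕ → ℤ} (hg : HookRecurrence g) {l : List ℕ}
include hg

theorem eq_drop (hl : IsPartition l) {j : ℕ} (hj : j < l.length) :
    g (l.drop j) = hookLength (l.drop j) * g ((colErase l).drop j)
      + (-1) ^ (l.getD j 0 + (colErase l).getD (j + 1) 0) * g ((colErase l).drop (j + 1)) := by
  rw [hg.eq _ (hl.drop j) (by simpa using hj), colErase_drop hl, List.headD_drop,
    List.getD_drop, List.tail_drop, add_comm j 1]

theorem eq_of_headD_le_one (hl : IsPartition l) (hne : l ≠ []) (h1 : l.headD 0 ≤ 1) :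
    g l = l.length - 1 := by
  have hhead : l.headD 0 = 1 := le_antisymm h1 (hl.headD_pos hne)
  rw [hg.eq l hl hne, colErase_eq_nil hl h1, hookLength, hhead, List.tail_nil, hg.nil,
    Nat.add_sub_cancel_left, List.getD_nil]
  ring

theorem nonneg (hl : IsPartition l) (h : 2 ≤ l.sum → 1 ≤ g l) : 0 ≤ g l := by
  by_cases h2 : 2 ≤ l.sum
  · linarith [h h2]
  rcases eq_or_ne l [] with rfl | hne
  · simp [hg.nil]
  · rw [hg.eq_of_headD_le_one hl hne (by linarith [l.headD_le_sum])]
    have := List.length_pos_iff.mpr hne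
    omega

theorem drop_le_of_eigenBounds (hb : EigenBounds g l) (h2 : 2 ≤ l.sum)
    (hpar : l.headD 0 % 2 = l.getD 1 0 % 2) {j : ℕ} (hj : 1 ≤ j) : g (l.drop j) ≤ g l := by
  by_cases hjl : j < l.length
  · exact (hb.drop_lt hpar j hj hjl).le
  · rw [List.drop_eq_nil_of_le (not_lt.mp hjl), hg.nil]
    exact hb.one_le h2

theorem drop_add_le_of_headD_le_one (hl : IsPartition l) (h12 : l.getD 1 0 = l.headD 0)
    (h3 : l.getD 2 0 < l.headD 0) (h1 : l.headD 0 ≤ 1) {j : ℕ} (hj : 2 ≤ j) :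
    g (l.drop j) + g (l.drop 1) ≤ g l := by
  have hne : l ≠ [] := by rintro rfl; simp at h3
  have hlen : l.length = 2 := by
    have h2 : 1 < l.length := List.lt_length_of_getD_ne (show l.getD 1 0 ≠ 0 by omega)
    by_contra h
    have := hl.getD_pos (show 2 < l.length by omega)
    omega
  rw [List.drop_eq_nil_of_le (by omega), hg.nil, hg.eq_of_headD_le_one hl hne h1,
    hg.eq_of_headD_le_one (hl.drop 1) (by rw [ne_eq, List.drop_eq_nil_iff]; omega)
      (by rw [List.headD_drop]; omega),
    List.length_drop, hlen]
  norm_num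

section Step

variable (ih : ∀ m, IsPartition m → m.sum < l.sum → EigenBounds g m)
include ih

theorem nonneg_colErase_drop (hl : IsPartition l) (hne : l ≠ []) (i : ℕ) :
    0 ≤ g ((colErase l).drop i) := by
  have hsum : ((colErase l).drop i).sum < l.sum :=
    ((List.drop_sublist _ _).sum_le_sum fun _ _ => Nat.zero_le _).trans_lt
      (sum_colErase_lt hl hne)
  exact hg.nonneg (hl.colErase.drop i) (ih _ (hl.colErase.drop i) hsum).one_le

theorem one_le_colErase (hl : IsPartition l) (h : l.headD 0 ≠ 2 ∨ 2 ≤ l.getD 1 0) :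
    1 ≤ g (colErase l) := by
  by_cases h1 : l.headD 0 ≤ 1
  · rw [colErase_eq_nil hl h1, hg.nil]
  have hne : l ≠ [] := by rintro rfl; simp at h1
  refine (ih _ hl.colErase (sum_colErase_lt hl hne)).one_le ?_
  rcases h with h3 | h2
  · have := (colErase l).headD_le_sum
    rw [headD_colErase hl] at this
    omega
  · exact two_le_sum_colErase hl h2

theorem one_le_of_getD_one_le_one (hl : IsPartition l) (h2 : 2 ≤ l.sum)
    (hsecond : l.getD 1 0 ≤ 1) : 1 ≤ g l := by
  have hne : l ≠ [] := by rintro rfl; simp at h2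
  rw [hg.eq l hl hne, colErase_tail_eq_nil hl hsecond, hg.nil, getD_colErase hl,
    Nat.sub_eq_zero_of_le hsecond, add_zero]
  rcases Nat.even_or_odd (l.headD 0) with he | ho
  · have := hg.nonneg_colErase_drop ih hl hne 0
    rw [List.drop_zero] at this
    rw [he.neg_one_pow]
    nlinarith [mul_nonneg (Nat.cast_nonneg (hookLength l)) this]
  have hodd := Nat.odd_iff.mp ho
  have hμ := hg.one_le_colErase ih hl (Or.inl (by omega))
  -- `λ₁ = 1` forces `r ≥ 2` because `n ≥ 2`
  have hH : (2 : ℤ) ≤ hookLength l := by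
    have hsum := hl.sum_le_length_mul_headD
    have hpos := hl.headD_pos hne
    rw [hookLength]
    rcases (show l.headD 0 = 1 ∨ 3 ≤ l.headD 0 by omega) with h1 | h3
    · rw [h1, mul_one] at hsum
      omega
    · omega
  rw [ho.neg_one_pow]
  nlinarith

theorem one_le_of_eigenBounds_lt (hl : IsPartition l) (h2 : 2 ≤ l.sum) : 1 ≤ g l := by
  by_cases hsecond : l.getD 1 0 ≤ 1
  · exact hg.one_le_of_getD_one_le_one ih hl h2 hsecond
  rw [not_le] at hsecond
  have hne : l ≠ [] := by rintro rfl; simp at h2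
  have hμ := hg.one_le_colErase ih hl (Or.inr hsecond)
  have hH : (1 : ℤ) ≤ hookLength l := by
    have := hl.getD_le_headD 1
    rw [hookLength]
    omega
  rw [hg.eq l hl hne, ← List.drop_one]
  rcases Nat.even_or_odd (l.headD 0 + (colErase l).getD 1 0) with he | ho
  · rw [he.neg_one_pow]
    nlinarith [hg.nonneg_colErase_drop ih hl hne 1]
  have hpar : l.headD 0 % 2 = l.getD 1 0 % 2 := by
    rw [getD_colErase hl] at ho
    rcases ho with ⟨k, hk⟩
    omega
  have := (ih _ hl.colErase (sum_colErase_lt hl hne)).drop_lt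
    (headD_colErase_mod_two hl hsecond hpar) 1 le_rfl (one_lt_length_colErase hl hsecond)
  rw [ho.neg_one_pow]
  nlinarith

theorem drop_le_hookLength_sub_one_mul (hl : IsPartition l) (hsecond : 2 ≤ l.getD 1 0)
    (hpar : l.headD 0 % 2 = l.getD 1 0 % 2) {j : ℕ} (hj : 1 ≤ j) (hjl : j < l.length) :
    g (l.drop j) ≤ (hookLength l - 1) * g (colErase l) := by
  have hne : l ≠ [] := List.ne_nil_of_length_pos (by omega)
  have hμ := ih _ hl.colErase (sum_colErase_lt hl hne)
  have hμsum := two_le_sum_colErase hl hsecond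
  have hle : ∀ i, 1 ≤ i → g ((colErase l).drop i) ≤ g (colErase l) :=
    fun i hi => hg.drop_le_of_eigenBounds hμ hμsum (headD_colErase_mod_two hl hsecond hpar) hi
  have hnn := hg.nonneg_colErase_drop ih hl hne
  have hHj : (hookLength (l.drop j) : ℤ) ≤ hookLength l - 1 := by
    have := hl.getD_le_headD j
    rw [hookLength_drop, hookLength]
    omega
  rw [hg.eq_drop hl hjl]
  rcases Nat.even_or_odd (l.getD j 0 + (colErase l).getD (j + 1) 0) with he | ho
  swap
  · rw [ho.neg_one_pow]
    nlinarith [mul_le_mul hHj (hle j hj) (hnn j) (by linarith), hnn (j + 1)]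
  rw [he.neg_one_pow, one_mul]
  by_cases hHj2 : (hookLength (l.drop j) : ℤ) ≤ hookLength l - 2
  · nlinarith [mul_le_mul hHj2 (hle j hj) (hnn j) (by linarith), hle (j + 1) (by omega)]
  -- otherwise `j = 1` and `λ₁ = λ₂`, and the even sign forces `λ₃ < λ₂`
  have := hl.getD_le_headD 1
  have := hl.getD_antitone hj
  rw [hookLength_drop, hookLength] at hHj2
  obtain ⟨rfl, h12⟩ : j = 1 ∧ l.getD 1 0 = l.headD 0 := by omega
  simp only [Nat.reduceAdd] at he ⊢
  have h3 : l.getD 2 0 < l.getD 1 0 := by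
    have := hl.getD_antitone (show 1 ≤ 2 by norm_num)
    rw [getD_colErase hl] at he
    rcases he with ⟨k, hk⟩
    omega
  have hμ2 := hμ.drop_add_le (by rw [getD_colErase hl, headD_colErase hl, h12])
    (by rw [getD_colErase hl, headD_colErase hl]; omega) 2 le_rfl
  have hH1 : (hookLength (l.drop 1) : ℤ) = hookLength l - 1 := by
    rw [hookLength_drop, hookLength]
    omega
  rw [hH1]
  nlinarith [mul_le_mul_of_nonneg_left (hle 1 le_rfl)
    (show (0 : ℤ) ≤ hookLength l - 2 by rw [hookLength]; omega)]

theorem drop_lt_of_eigenBounds_lt (hl : IsPartition l) (hpar : l.headD 0 % 2 = l.getD 1 0 % 2)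
    {j : ℕ} (hj : 1 ≤ j) (hjl : j < l.length) : g (l.drop j) < g l := by
  have hne : l ≠ [] := List.ne_nil_of_length_pos (by omega)
  have hsecond_pos : 0 < l.getD 1 0 := hl.getD_pos (by omega)
  rw [hg.eq l hl hne, neg_one_pow_headD_add_getD_colErase hl hsecond_pos hpar]
  by_cases hsecond : l.getD 1 0 ≤ 1
  · have hdrop : (l.drop j).headD 0 ≤ 1 := by
      rw [List.headD_drop]
      exact (hl.getD_antitone hj).trans hsecond
    rw [colErase_tail_eq_nil hl hsecond, hg.nil,
      hg.eq_of_headD_le_one (hl.drop j) (by rw [ne_eq, List.drop_eq_nil_iff]; omega) hdrop,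
      List.length_drop]
    have hμ := hg.one_le_colErase ih hl (Or.inl (by omega))
    have hH : (l.length : ℤ) ≤ hookLength l := by
      rw [hookLength]
      omega
    have hrest : ((l.length - j : ℕ) : ℤ) ≤ l.length - 1 := by omega
    nlinarith [mul_le_mul_of_nonneg_left hμ (Nat.cast_nonneg (hookLength l))]
  rw [not_le] at hsecond
  have htail := (ih _ hl.colErase (sum_colErase_lt hl hne)).drop_lt
    (headD_colErase_mod_two hl hsecond hpar) 1 le_rfl (one_lt_length_colErase hl hsecond)
  rw [← List.drop_one]
  linarith [hg.drop_le_hookLength_sub_one_mul ih hl hsecond hpar hj hjl]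

theorem drop_add_le_of_eigenBounds_lt (hl : IsPartition l) (h12 : l.getD 1 0 = l.headD 0)
    (h3 : l.getD 2 0 < l.headD 0) {j : ℕ} (hj : 2 ≤ j) :
    g (l.drop j) + g (l.drop 1) ≤ g l := by
  have hne : l ≠ [] := by rintro rfl; simp at h3
  have hlen : 1 < l.length := List.lt_length_of_getD_ne (show l.getD 1 0 ≠ 0 by omega)
  by_cases h1 : l.headD 0 ≤ 1
  · exact hg.drop_add_le_of_headD_le_one hl h12 h3 h1 hj
  rw [not_le] at h1
  have hμ := ih _ hl.colErase (sum_colErase_lt hl hne)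
  have hμ12 : (colErase l).getD 1 0 = (colErase l).headD 0 := by
    rw [getD_colErase hl, headD_colErase hl, h12]
  have hμ1 := hμ.one_le (two_le_sum_colErase hl (by omega))
  have htail := hμ.drop_lt (by rw [hμ12]) 1 le_rfl (one_lt_length_colErase hl (by omega))
  have hμ2 := hμ.drop_add_le hμ12 (by rw [getD_colErase hl, headD_colErase hl]; omega)
  have hnn := hg.nonneg_colErase_drop ih hl hne
  have hH1 : (hookLength (l.drop 1) : ℤ) = hookLength l - 1 := by
    rw [hookLength_drop, hookLength]
    omega
  have hsign1 := neg_one_pow_mul_le (l.getD 1 0 + (colErase l).getD (1 + 1) 0) (hnn (1 + 1))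
  rw [hg.eq l hl hne, neg_one_pow_headD_add_getD_colErase hl (by omega) (by rw [h12]),
    ← List.drop_one, hg.eq_drop hl hlen, hH1]
  by_cases hjl : j < l.length
  · rw [hg.eq_drop hl hjl]
    have hHj : (hookLength (l.drop j) : ℤ) ≤ hookLength l - 3 := by
      have := hl.getD_antitone hj
      rw [hookLength_drop, hookLength]
      omega
    have hsignj := neg_one_pow_mul_le (l.getD j 0 + (colErase l).getD (j + 1) 0) (hnn (j + 1))
    have hbound : g ((colErase l).drop j) ≤ g (colErase l) - g ((colErase l).drop 1) := by
      linarith [hμ2 j hj]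
    nlinarith [mul_le_mul hHj hbound (hnn j) (by linarith), hμ2 (j + 1) (by omega),
      hμ2 2 le_rfl]
  · rw [List.drop_eq_nil_of_le (by omega), hg.nil]
    nlinarith [mul_le_mul (show (1 : ℤ) ≤ hookLength l - 1 by rw [hookLength]; omega)
      (show 1 ≤ g (colErase l) - g ((colErase l).drop 1) by linarith) zero_le_one
      (by linarith), hμ2 2 le_rfl]

end Step

theorem eigenBounds {l : List ℕ} (hl : IsPartition l) : EigenBounds g l :=
  have ih : ∀ m, IsPartition m → m.sum < l.sum → EigenBounds g m :=
    fun _ hm _ => eigenBounds hm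
  ⟨hg.one_le_of_eigenBounds_lt ih hl,
    fun hpar _ hj hjl => hg.drop_lt_of_eigenBounds_lt ih hl hpar hj hjl,
    fun h12 h3 _ hj => hg.drop_add_le_of_eigenBounds_lt ih hl h12 h3 hj⟩
termination_by l.sum

end HookRecurrence

theorem hookRecurrence_neg_one_pow_mul {e : List ℕ → ℤ} (h0 : e [] = 1)
    (hrec : ∀ l : List ℕ, IsPartition l → l ≠ [] →
      e l = (-1) ^ (l.headD 0 + l.length - 1) * e (colErase l.tail)
        + (-1) ^ (l.headD 0 + l.length - 1 + l.headD 0)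
          * ((l.headD 0 + l.length - 1 : ℕ) : ℤ) * e (colErase l)) :
    HookRecurrence fun l => (-1) ^ (l.sum - l.headD 0) * e l where
  nil := by simp [h0]
  eq l hl hne := by
    have hμsum := sum_colErase hl.2
    have hμhead := headD_colErase hl
    rw [hrec l hl hne, ← List.headD_drop, List.drop_one, ← colErase_tail hl]
    obtain ⟨a, t, rfl⟩ := List.exists_cons_of_ne_nil hne
    have hνsum := sum_colErase hl.of_cons.2
    have hνhead := headD_colErase hl.of_cons
    have ht := hl.of_cons.length_le_sum
    have hνle := (colErase t).headD_le_sum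
    have ha := hl.headD_pos hne
    simp only [List.tail_cons, List.headD_cons, List.sum_cons, List.length_cons]
      at hμsum hμhead ha ⊢
    have e1 : (-1 : ℤ) ^ (a + t.sum - a) * (-1) ^ (a + (t.length + 1) - 1)
        = (-1) ^ (a + (colErase t).headD 0)
          * (-1) ^ ((colErase t).sum - (colErase t).headD 0) := by
      rw [← pow_add, ← pow_add]
      exact neg_one_pow_congr (by rw [Nat.even_iff, Nat.even_iff]; omega)
    have e2 : (-1 : ℤ) ^ (a + t.sum - a) * (-1) ^ (a + (t.length + 1) - 1 + a)
        = (-1) ^ ((colErase (a :: t)).sum - (colErase (a :: t)).headD 0) := by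
      rw [← pow_add]
      exact neg_one_pow_congr (by rw [Nat.even_iff, Nat.even_iff]; omega)
    rw [hookLength, List.headD_cons, List.length_cons]
    linear_combination e (colErase t) * e1
      + ((a + (t.length + 1) - 1 : ℕ) : ℤ) * e (colErase (a :: t)) * e2

theorem stmt_15 (e : List ℕ → ℤ) (h0 : e [] = 1)
    (hrec : ∀ l : List ℕ, IsPartition l → l ≠ [] →
      e l = (-1) ^ (l.headD 0 + l.length - 1) * e (colErase l.tail)
        + (-1) ^ (l.headD 0 + l.length - 1 + l.headD 0)
          * ((l.headD 0 + l.length - 1 : ℕ) : ℤ) * e (colErase l)) :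
    ∀ l : List ℕ, IsPartition l → 2 ≤ l.sum →
      e l ≠ 0 ∧ (0 < e l ↔ Even (l.sum - l.headD 0)) := by
  intro l hl h2
  have hpos : 0 < (-1) ^ (l.sum - l.headD 0) * e l :=
    ((hookRecurrence_neg_one_pow_mul h0 hrec).eigenBounds hl).one_le h2
  rcases Nat.even_or_odd (l.sum - l.headD 0) with he | ho
  · rw [he.neg_one_pow, one_mul] at hpos
    exact ⟨hpos.ne', iff_of_true hpos he⟩
  · rw [ho.neg_one_pow, neg_one_mul, neg_pos] at hpos
    exact ⟨hpos.ne, iff_of_false hpos.not_gt (Nat.not_even_iff_odd.mpr ho)⟩
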